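/- arXiv:2603.16684 — 4 statements merged into one kernel-verified Lean document; each statement's English description precedes it below -/
import Mathlib

section
/- Let S be the unit square [0,1]×[0,1] and p a point in S. For every x > 0, the set of points q ∈ S with Euclidean distance at least √2 − x from p is contained in a closed disk of radius 2√2·x centered at some point of the plane (in fact, centered at the corner of S opposite the corner nearest p). -/
/-!
For `x ≥ 1/4` the disk of radius `2√2·x ≥ √2/2` around the centre of the square contains
the whole square. For `x < 1/4`, a partner `q` of `p` at distance at least `√2 - x` must be
more than `1/2` away from `p` in each coordinate, hence lies on the far side of `p` in both
coordinates. Then `|qᵢ - pᵢ| ≤ 1 - eᵢ`, where `eᵢ` is the distance from `qᵢ` to the endpoint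
of `[0, 1]` farther from `pᵢ`, and expanding `(√2 - x)² ≤ (1 - e₀)² + (1 - e₁)²` with
`eᵢ ≤ 1/2` gives `e₀ + e₁ ≤ (4√2/3)·x`, so `q` is within `2√2·x` of the far corner.
-/

open Real

def unitSquare : Set (EuclideanSpace ℝ (Fin 2)) :=
  {p | p 0 ∈ Set.Icc (0:ℝ) 1 ∧ p 1 ∈ Set.Icc (0:ℝ) 1}

open Set Metric

noncomputable section

def farEndpoint (p : ℝ) : ℝ := if p ≤ 1 / 2 then 1 else 0

def farCorner {ι : Type*} (p : EuclideanSpace ℝ ι) : EuclideanSpace ℝ ι :=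
  WithLp.toLp 2 fun i => farEndpoint (p i)

@[simp]
lemma farCorner_apply {ι : Type*} (p : EuclideanSpace ℝ ι) (i : ι) :
    farCorner p i = farEndpoint (p i) := rfl

end

lemma dist_le_one_sub_dist_farEndpoint {p q : ℝ} (hp : p ∈ Icc 0 1) (hq : q ∈ Icc 0 1)
    (hpq : 1 / 2 < dist p q) : dist p q ≤ 1 - dist q (farEndpoint p) := by
  obtain ⟨hp₀, hp₁⟩ := hp
  obtain ⟨hq₀, hq₁⟩ := hq
  simp only [farEndpoint, Real.dist_eq] at *
  split_ifs <;> cases abs_cases (p - q) <;> cases abs_cases (q - 1) <;>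
    cases abs_cases (q - 0) <;> linarith

lemma mem_unitSquare_iff {p : EuclideanSpace ℝ (Fin 2)} :
    p ∈ unitSquare ↔ ∀ i, p i ∈ Icc 0 1 := by
  rw [Fin.forall_fin_two]
  rfl

lemma dist_sq_eq_fin_two (p q : EuclideanSpace ℝ (Fin 2)) :
    dist p q ^ 2 = dist (p 0) (q 0) ^ 2 + dist (p 1) (q 1) ^ 2 := by
  rw [EuclideanSpace.dist_sq_eq, Fin.sum_univ_two]

lemma unitSquare_subset_closedBall :
    unitSquare ⊆ closedBall !₂[1 / 2, 1 / 2] (√2 / 2) := by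
  rintro q ⟨⟨hq₀, hq₀'⟩, hq₁, hq₁'⟩
  rw [mem_closedBall, ← sq_le_sq₀ dist_nonneg (by positivity), dist_sq_eq_fin_two]
  simp only [Real.dist_eq, sq_abs, div_pow, sq_sqrt zero_le_two,
    Matrix.cons_val_zero, Matrix.cons_val_one, Matrix.cons_val_fin_one]
  nlinarith

lemma half_lt_of_sqrt_two_sub_sq_le {a b x : ℝ} (ha : 0 ≤ a) (hb : b ^ 2 ≤ 1) (hx : x < 1 / 4)
    (h : (√2 - x) ^ 2 ≤ a ^ 2 + b ^ 2) : 1 / 2 < a := by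
  have hsqrt : √2 < 13 / 8 := by
    rw [sqrt_lt' (by norm_num)]
    norm_num
  have hmono : (√2 - 1 / 4) ^ 2 < (√2 - x) ^ 2 :=
    pow_lt_pow_left₀ (by linarith) (by linarith [one_lt_sqrt_two]) two_ne_zero
  have ha_sq : 1 / 4 < a ^ 2 := by
    nlinarith [sq_sqrt (zero_le_two : (0 : ℝ) ≤ 2)]
  nlinarith

lemma sq_add_sq_le_of_sqrt_two_sub_sq_le {e₀ e₁ x : ℝ} (he₀ : e₀ ∈ Icc 0 (1 / 2))
    (he₁ : e₁ ∈ Icc 0 (1 / 2)) (h : (√2 - x) ^ 2 ≤ (1 - e₀) ^ 2 + (1 - e₁) ^ 2) :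
    e₀ ^ 2 + e₁ ^ 2 ≤ (2 * √2 * x) ^ 2 := by
  obtain ⟨he₀, he₀'⟩ := he₀
  obtain ⟨he₁, he₁'⟩ := he₁
  have hsq : √2 ^ 2 = 2 := sq_sqrt zero_le_two
  -- `eᵢ ≤ 1/2` gives `2 eᵢ - eᵢ² ≥ 3/2 eᵢ`
  have hsum : 3 / 2 * (e₀ + e₁) ≤ 2 * √2 * x := by
    nlinarith [sq_nonneg x]
  nlinarith [mul_nonneg he₀ he₁]

lemma dist_farCorner_le {p q : EuclideanSpace ℝ (Fin 2)} (hp : p ∈ unitSquare)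
    (hq : q ∈ unitSquare) {x : ℝ} (hx₀ : 0 ≤ x) (hx : x < 1 / 4) (h : √2 - x ≤ dist p q) :
    dist q (farCorner p) ≤ 2 * √2 * x := by
  rw [mem_unitSquare_iff] at hp hq
  have hdist : (√2 - x) ^ 2 ≤ dist (p 0) (q 0) ^ 2 + dist (p 1) (q 1) ^ 2 := by
    rw [← dist_sq_eq_fin_two]
    exact pow_le_pow_left₀ (by linarith [one_lt_sqrt_two]) h 2
  have hcoord_sq_le_one (i : Fin 2) : dist (p i) (q i) ^ 2 ≤ 1 :=
    pow_le_one₀ dist_nonneg (Real.dist_le_of_mem_Icc_01 (hp i) (hq i))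
  have hhalf : ∀ i, 1 / 2 < dist (p i) (q i) := by
    rw [Fin.forall_fin_two]
    exact ⟨half_lt_of_sqrt_two_sub_sq_le dist_nonneg (hcoord_sq_le_one 1) hx hdist,
      half_lt_of_sqrt_two_sub_sq_le dist_nonneg (hcoord_sq_le_one 0) hx (by linarith)⟩
  have hfar (i : Fin 2) := dist_le_one_sub_dist_farEndpoint (hp i) (hq i) (hhalf i)
  have he (i : Fin 2) : dist (q i) (farEndpoint (p i)) ∈ Icc 0 (1 / 2) :=
    ⟨dist_nonneg, by linarith [hfar i, hhalf i]⟩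
  rw [← sq_le_sq₀ dist_nonneg (by positivity), dist_sq_eq_fin_two]
  refine sq_add_sq_le_of_sqrt_two_sub_sq_le (he 0) (he 1) (hdist.trans ?_)
  exact add_le_add (pow_le_pow_left₀ dist_nonneg (hfar 0) 2)
    (pow_le_pow_left₀ dist_nonneg (hfar 1) 2)

/-- For every point `p` of the unit square and every `x > 0`, the set
of points `q` of the square with `dist p q ≥ √2 - x` is contained in a closed disk
of radius `2√2·x` around some point of the plane. -/
theorem square_diametric_partners_local
    (p : EuclideanSpace ℝ (Fin 2)) (hp : p ∈ unitSquare) (x : ℝ) (hx : 0 < x) :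
    ∃ c : EuclideanSpace ℝ (Fin 2),
      ∀ q ∈ unitSquare, Real.sqrt 2 - x ≤ dist p q →
        dist q c ≤ 2 * Real.sqrt 2 * x := by
  rcases lt_or_ge x (1 / 4) with hx_small | hx_large
  · exact ⟨farCorner p, fun q hq h => dist_farCorner_le hp hq hx.le hx_small h⟩
  · refine ⟨!₂[1 / 2, 1 / 2], fun q hq _ => (unitSquare_subset_closedBall hq).trans ?_⟩
    nlinarith [sqrt_nonneg 2]
end

section
/- Let p be a point in the unit square S = [0,1]², lying in the closed top-right quadrant with p in the upper-left diagonal half (i.e., p.x ≥ 1/2 and p.y ≥ p.x). Let x > 0 and let q ∈ S be a point whose distance to every corner of S is at least x. Then dist(p,q) + 0.23·x ≤ dist(p, (0,0)), i.e., the bottom-left corner is farther from p than q by at least 0.23·x. -/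
open Real

/-- A point of the plane with given coordinates. -/
noncomputable def pt (a b : ℝ) : EuclideanSpace ℝ (Fin 2) :=
  (EuclideanSpace.equiv (Fin 2) ℝ).symm ![a, b]

private lemma le_of_sq_le' {a b : ℝ} (ha : 0 ≤ a) (hb : 0 ≤ b) (h : a^2 ≤ b^2) : a ≤ b := by
  rw [← Real.sqrt_sq ha, ← Real.sqrt_sq hb]; exact Real.sqrt_le_sqrt h

private lemma dist_formula (p q : EuclideanSpace ℝ (Fin 2)) :
    dist p q = Real.sqrt ((p 0 - q 0)^2 + (p 1 - q 1)^2) := by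
  rw [EuclideanSpace.dist_eq, Fin.sum_univ_two]
  simp [Real.dist_eq, sq_abs]

private lemma leaf (a b u v x d w l : ℝ) (hx : 0 ≤ x) (hd : 0 ≤ d) (hw : 0 ≤ w) (hl : 0 ≤ l)
    (hxw : x ≤ w) (hdl : d ≤ l)
    (hpoly : 0.0529*w^2 + 0.46*w*l ≤ 2*(a*u+b*v)-u^2-v^2) :
    0.46*x*d + 0.0529*x^2 ≤ 2*(a*u+b*v)-u^2-v^2 := by
  have h1 : x*d ≤ w*l := mul_le_mul hxw hdl hd hw
  nlinarith [mul_le_mul hxw hxw hx hw]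

set_option maxHeartbeats 1600000 in
private lemma key (a b u v x d : ℝ)
    (ha1 : 1/2 ≤ a) (ha2 : a ≤ 1) (hb1 : a ≤ b) (hb2 : b ≤ 1)
    (hu1 : 0 ≤ u) (hu2 : u ≤ 1) (hv1 : 0 ≤ v) (hv2 : v ≤ 1)
    (hx : 0 < x) (hd : 0 ≤ d) (hd2 : d^2 = (a-u)^2+(b-v)^2)
    (h00 : x^2 ≤ u^2+v^2) (h10 : x^2 ≤ (1-u)^2+v^2)
    (h01 : x^2 ≤ u^2+(1-v)^2) (h11 : x^2 ≤ (1-u)^2+(1-v)^2) :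
    0.46*x*d + 0.0529*x^2 ≤ 2*(a*u+b*v)-u^2-v^2 := by
  have hb0 : (1:ℝ)/2 ≤ b := le_trans ha1 hb1
  rcases le_total u (1/2) with hu | hu
  · rcases le_total v (1/2) with hv | hv
    · have nha1 : (0:ℝ) ≤ a-1/2 := by linarith
      have nha2 : (0:ℝ) ≤ 1-a := by linarith
      have nhb1 : (0:ℝ) ≤ b-a := by linarith
      have nhb2 : (0:ℝ) ≤ 1-b := by linarith
      have nhsa : (0:ℝ) ≤ a-u := by linarith
      have nhsb : (0:ℝ) ≤ b-v := by linarith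
      have nhu1 : (0:ℝ) ≤ u-(0) := by linarith
      have nhu2 : (0:ℝ) ≤ (1/2)-u := by linarith
      have nhv1 : (0:ℝ) ≤ v-(0) := by linarith
      have nhv2 : (0:ℝ) ≤ (1/2)-v := by linarith
      refine leaf a b u v x d (u+v) ((a-u)+(b-v)) hx.le hd (by linarith) (by linarith) ?_ ?_ ?_
      · exact le_of_sq_le' hx.le (by linarith) (by nlinarith [h00, mul_nonneg (show (0:ℝ) ≤ u by linarith) (show (0:ℝ) ≤ v by linarith)])
      · exact le_of_sq_le' hd (by linarith) (by nlinarith [hd2, mul_nonneg nhsa nhsb])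
      · linarith [mul_nonneg nha1 nhu1, mul_nonneg nha1 nhv1, mul_nonneg nha2 nhu1, mul_nonneg nha2 nhv1, mul_nonneg nhb1 nhv1, mul_nonneg nhb2 nhu1, mul_nonneg nhu1 nhu2, mul_nonneg nhu1 nhv1, mul_nonneg nhv1 nhv2]
    · rcases le_total v b with hsb0 | hsb0
      · have nha1 : (0:ℝ) ≤ a-1/2 := by linarith
        have nha2 : (0:ℝ) ≤ 1-a := by linarith
        have nhb1 : (0:ℝ) ≤ b-a := by linarith
        have nhsa : (0:ℝ) ≤ a-u := by linarith
        have nhsb : (0:ℝ) ≤ b-v := by linarith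
        have nhu1 : (0:ℝ) ≤ u-(0) := by linarith
        have nhu2 : (0:ℝ) ≤ (1/2)-u := by linarith
        have nhv1 : (0:ℝ) ≤ v-(1/2) := by linarith
        have nhv2 : (0:ℝ) ≤ (1)-v := by linarith
        refine leaf a b u v x d (u+(1-v)) ((a-u)+(b-v)) hx.le hd (by linarith) (by linarith) ?_ ?_ ?_
        · exact le_of_sq_le' hx.le (by linarith) (by nlinarith [h01, mul_nonneg (show (0:ℝ) ≤ u by linarith) (show (0:ℝ) ≤ (1-v) by linarith)])
        · exact le_of_sq_le' hd (by linarith) (by nlinarith [hd2, mul_nonneg nhsa nhsb])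
        · linarith [mul_nonneg nha1 nha1, mul_nonneg nha1 nha2, mul_nonneg nha1 nhb1, mul_nonneg nha1 nhu1, mul_nonneg nha1 nhv1, mul_nonneg nha2 nhb1, mul_nonneg nha2 nhu1, mul_nonneg nha2 nhv2, mul_nonneg nhb1 nhu2, mul_nonneg nhb1 nhv1, mul_nonneg nhu1 nhu2, mul_nonneg nhu1 nhv1, mul_nonneg nhv1 nhv2]
      · have nha1 : (0:ℝ) ≤ a-1/2 := by linarith
        have nha2 : (0:ℝ) ≤ 1-a := by linarith
        have nhb1 : (0:ℝ) ≤ b-a := by linarith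
        have nhsa : (0:ℝ) ≤ a-u := by linarith
        have nhsb : (0:ℝ) ≤ v-b := by linarith
        have nhu1 : (0:ℝ) ≤ u-(0) := by linarith
        have nhu2 : (0:ℝ) ≤ (1/2)-u := by linarith
        have nhv1 : (0:ℝ) ≤ v-(1/2) := by linarith
        have nhv2 : (0:ℝ) ≤ (1)-v := by linarith
        refine leaf a b u v x d (u+(1-v)) ((a-u)+(v-b)) hx.le hd (by linarith) (by linarith) ?_ ?_ ?_
        · exact le_of_sq_le' hx.le (by linarith) (by nlinarith [h01, mul_nonneg (show (0:ℝ) ≤ u by linarith) (show (0:ℝ) ≤ (1-v) by linarith)])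
        · exact le_of_sq_le' hd (by linarith) (by nlinarith [hd2, mul_nonneg nhsa nhsb])
        · linarith [mul_nonneg nha1 nha1, mul_nonneg nha1 nha2, mul_nonneg nha1 nhb1, mul_nonneg nha1 nhu1, mul_nonneg nha1 nhv1, mul_nonneg nha2 nhb1, mul_nonneg nha2 nhu1, mul_nonneg nha2 nhv2, mul_nonneg nhb1 nhu1, mul_nonneg nhb1 nhv1, mul_nonneg nhu1 nhu2, mul_nonneg nhu1 nhv2, mul_nonneg nhv1 nhv2]
  · rcases le_total v (1/2) with hv | hv
    · rcases le_total u a with hsa0 | hsa0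
      · have nha1 : (0:ℝ) ≤ a-1/2 := by linarith
        have nha2 : (0:ℝ) ≤ 1-a := by linarith
        have nhb1 : (0:ℝ) ≤ b-a := by linarith
        have nhb2 : (0:ℝ) ≤ 1-b := by linarith
        have nhsa : (0:ℝ) ≤ a-u := by linarith
        have nhsb : (0:ℝ) ≤ b-v := by linarith
        have nhu1 : (0:ℝ) ≤ u-(1/2) := by linarith
        have nhu2 : (0:ℝ) ≤ (1)-u := by linarith
        have nhv1 : (0:ℝ) ≤ v-(0) := by linarith
        have nhv2 : (0:ℝ) ≤ (1/2)-v := by linarith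
        refine leaf a b u v x d ((1-u)+v) ((a-u)+(b-v)) hx.le hd (by linarith) (by linarith) ?_ ?_ ?_
        · exact le_of_sq_le' hx.le (by linarith) (by nlinarith [h10, mul_nonneg (show (0:ℝ) ≤ (1-u) by linarith) (show (0:ℝ) ≤ v by linarith)])
        · exact le_of_sq_le' hd (by linarith) (by nlinarith [hd2, mul_nonneg nhsa nhsb])
        · linarith [mul_nonneg nha1 nha1, mul_nonneg nha1 nha2, mul_nonneg nha1 nhb2, mul_nonneg nha1 nhu1, mul_nonneg nha1 nhv1, mul_nonneg nha2 nhb2, mul_nonneg nha2 nhu2, mul_nonneg nha2 nhv1, mul_nonneg nha2 nhsa, mul_nonneg nhb1 nhu1, mul_nonneg nhb1 nhv1, mul_nonneg nhu1 nhu2, mul_nonneg nhu1 nhv1, mul_nonneg nhv1 nhv2]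
      · have nha1 : (0:ℝ) ≤ a-1/2 := by linarith
        have nha2 : (0:ℝ) ≤ 1-a := by linarith
        have nhb1 : (0:ℝ) ≤ b-a := by linarith
        have nhb2 : (0:ℝ) ≤ 1-b := by linarith
        have nhsa : (0:ℝ) ≤ u-a := by linarith
        have nhsb : (0:ℝ) ≤ b-v := by linarith
        have nhu1 : (0:ℝ) ≤ u-(1/2) := by linarith
        have nhu2 : (0:ℝ) ≤ (1)-u := by linarith
        have nhv1 : (0:ℝ) ≤ v-(0) := by linarith
        have nhv2 : (0:ℝ) ≤ (1/2)-v := by linarith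
        refine leaf a b u v x d ((1-u)+v) ((u-a)+(b-v)) hx.le hd (by linarith) (by linarith) ?_ ?_ ?_
        · exact le_of_sq_le' hx.le (by linarith) (by nlinarith [h10, mul_nonneg (show (0:ℝ) ≤ (1-u) by linarith) (show (0:ℝ) ≤ v by linarith)])
        · exact le_of_sq_le' hd (by linarith) (by nlinarith [hd2, mul_nonneg nhsa nhsb])
        · linarith [mul_nonneg nha1 nha1, mul_nonneg nha1 nha2, mul_nonneg nha1 nhu1, mul_nonneg nha1 nhv1, mul_nonneg nha2 nhu2, mul_nonneg nha2 nhv1, mul_nonneg nhb1 nhv1, mul_nonneg nhb2 nhu2, mul_nonneg nhu1 nhu2, mul_nonneg nhu2 nhv1, mul_nonneg nhv1 nhv2]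
    · rcases le_total u a with hsa0 | hsa0 <;> rcases le_total v b with hsb0 | hsb0
      · have nha1 : (0:ℝ) ≤ a-1/2 := by linarith
        have nha2 : (0:ℝ) ≤ 1-a := by linarith
        have nhb1 : (0:ℝ) ≤ b-a := by linarith
        have nhsa : (0:ℝ) ≤ a-u := by linarith
        have nhsb : (0:ℝ) ≤ b-v := by linarith
        have nhu1 : (0:ℝ) ≤ u-(1/2) := by linarith
        have nhu2 : (0:ℝ) ≤ (1)-u := by linarith
        have nhv1 : (0:ℝ) ≤ v-(1/2) := by linarith
        have nhv2 : (0:ℝ) ≤ (1)-v := by linarith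
        refine leaf a b u v x d ((1-u)+(1-v)) ((a-u)+(b-v)) hx.le hd (by linarith) (by linarith) ?_ ?_ ?_
        · exact le_of_sq_le' hx.le (by linarith) (by nlinarith [h11, mul_nonneg (show (0:ℝ) ≤ (1-u) by linarith) (show (0:ℝ) ≤ (1-v) by linarith)])
        · exact le_of_sq_le' hd (by linarith) (by nlinarith [hd2, mul_nonneg nhsa nhsb])
        · linarith [mul_nonneg nha1 nha1, mul_nonneg nha1 nha2, mul_nonneg nha1 nhb1, mul_nonneg nha1 nhu1, mul_nonneg nha1 nhv1, mul_nonneg nha2 nhb1, mul_nonneg nha2 nhu2, mul_nonneg nha2 nhv2, mul_nonneg nhb1 nhu1, mul_nonneg nhb1 nhv1, mul_nonneg nhu1 nhu2, mul_nonneg nhu1 nhv2, mul_nonneg nhv1 nhv2]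
      · have nha1 : (0:ℝ) ≤ a-1/2 := by linarith
        have nha2 : (0:ℝ) ≤ 1-a := by linarith
        have nhb1 : (0:ℝ) ≤ b-a := by linarith
        have nhsa : (0:ℝ) ≤ a-u := by linarith
        have nhsb : (0:ℝ) ≤ v-b := by linarith
        have nhu1 : (0:ℝ) ≤ u-(1/2) := by linarith
        have nhu2 : (0:ℝ) ≤ (1)-u := by linarith
        have nhv1 : (0:ℝ) ≤ v-(1/2) := by linarith
        have nhv2 : (0:ℝ) ≤ (1)-v := by linarith
        refine leaf a b u v x d ((1-u)+(1-v)) ((a-u)+(v-b)) hx.le hd (by linarith) (by linarith) ?_ ?_ ?_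
        · exact le_of_sq_le' hx.le (by linarith) (by nlinarith [h11, mul_nonneg (show (0:ℝ) ≤ (1-u) by linarith) (show (0:ℝ) ≤ (1-v) by linarith)])
        · exact le_of_sq_le' hd (by linarith) (by nlinarith [hd2, mul_nonneg nhsa nhsb])
        · linarith [mul_nonneg nha1 nha1, mul_nonneg nha1 nha2, mul_nonneg nha1 nhb1, mul_nonneg nha1 nhu1, mul_nonneg nha1 nhv1, mul_nonneg nha2 nhb1, mul_nonneg nha2 nhu2, mul_nonneg nha2 nhv2, mul_nonneg nhb1 nhu2, mul_nonneg nhb1 nhv1, mul_nonneg nhu1 nhu2, mul_nonneg nhu1 nhv2, mul_nonneg nhv1 nhv2]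
      · have nha1 : (0:ℝ) ≤ a-1/2 := by linarith
        have nha2 : (0:ℝ) ≤ 1-a := by linarith
        have nhb1 : (0:ℝ) ≤ b-a := by linarith
        have nhsa : (0:ℝ) ≤ u-a := by linarith
        have nhsb : (0:ℝ) ≤ b-v := by linarith
        have nhu1 : (0:ℝ) ≤ u-(1/2) := by linarith
        have nhu2 : (0:ℝ) ≤ (1)-u := by linarith
        have nhv1 : (0:ℝ) ≤ v-(1/2) := by linarith
        have nhv2 : (0:ℝ) ≤ (1)-v := by linarith
        refine leaf a b u v x d ((1-u)+(1-v)) ((u-a)+(b-v)) hx.le hd (by linarith) (by linarith) ?_ ?_ ?_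
        · exact le_of_sq_le' hx.le (by linarith) (by nlinarith [h11, mul_nonneg (show (0:ℝ) ≤ (1-u) by linarith) (show (0:ℝ) ≤ (1-v) by linarith)])
        · exact le_of_sq_le' hd (by linarith) (by nlinarith [hd2, mul_nonneg nhsa nhsb])
        · linarith [mul_nonneg nha1 nha1, mul_nonneg nha1 nha2, mul_nonneg nha1 nhb1, mul_nonneg nha1 nhu1, mul_nonneg nha1 nhv1, mul_nonneg nha2 nhb1, mul_nonneg nha2 nhu2, mul_nonneg nha2 nhv2, mul_nonneg nhb1 nhu1, mul_nonneg nhb1 nhv1, mul_nonneg nhu1 nhu2, mul_nonneg nhu1 nhv2, mul_nonneg nhv1 nhv2]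
      · have nha1 : (0:ℝ) ≤ a-1/2 := by linarith
        have nha2 : (0:ℝ) ≤ 1-a := by linarith
        have nhb1 : (0:ℝ) ≤ b-a := by linarith
        have nhsa : (0:ℝ) ≤ u-a := by linarith
        have nhsb : (0:ℝ) ≤ v-b := by linarith
        have nhu1 : (0:ℝ) ≤ u-(1/2) := by linarith
        have nhu2 : (0:ℝ) ≤ (1)-u := by linarith
        have nhv1 : (0:ℝ) ≤ v-(1/2) := by linarith
        have nhv2 : (0:ℝ) ≤ (1)-v := by linarith
        refine leaf a b u v x d ((1-u)+(1-v)) ((u-a)+(v-b)) hx.le hd (by linarith) (by linarith) ?_ ?_ ?_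
        · exact le_of_sq_le' hx.le (by linarith) (by nlinarith [h11, mul_nonneg (show (0:ℝ) ≤ (1-u) by linarith) (show (0:ℝ) ≤ (1-v) by linarith)])
        · exact le_of_sq_le' hd (by linarith) (by nlinarith [hd2, mul_nonneg nhsa nhsb])
        · linarith [mul_nonneg nha1 nha1, mul_nonneg nha1 nha2, mul_nonneg nha1 nhb1, mul_nonneg nha1 nhu1, mul_nonneg nha1 nhv1, mul_nonneg nha2 nhb1, mul_nonneg nha2 nhu2, mul_nonneg nha2 nhv2, mul_nonneg nhb1 nhu2, mul_nonneg nhb1 nhv1, mul_nonneg nhu1 nhu2, mul_nonneg nhu2 nhv2, mul_nonneg nhv1 nhv2]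

set_option maxHeartbeats 1600000 in
/-- If `p` lies in the upper-left diagonal half of the top-right
quadrant of the unit square (`p.x ≥ 1/2`, `p.y ≥ p.x`), `x > 0`, and `q` is a
point of the square whose distance to every corner is at least `x`, then the
bottom-left corner is farther from `p` than `q` is, by at least `0.23·x`. -/
theorem square_corner_dist
    (p q : EuclideanSpace ℝ (Fin 2)) (hp : p ∈ unitSquare) (hq : q ∈ unitSquare)
    (hpx : (1:ℝ)/2 ≤ p 0) (hpy : p 0 ≤ p 1)
    (x : ℝ) (hx : 0 < x)
    (h00 : x ≤ dist q (pt 0 0)) (h10 : x ≤ dist q (pt 1 0))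
    (h01 : x ≤ dist q (pt 0 1)) (h11 : x ≤ dist q (pt 1 1)) :
    dist p q + 0.23 * x ≤ dist p (pt 0 0) := by
  obtain ⟨⟨ha0, ha2⟩, ⟨hb0, hb2⟩⟩ := hp
  obtain ⟨⟨hu1, hu2⟩, ⟨hv1, hv2⟩⟩ := hq
  set a := p 0 with hadef
  set b := p 1 with hbdef
  set u := q 0 with hudef
  set v := q 1 with hvdef
  have sqb : ∀ c e : ℝ, x ≤ dist q (pt c e) → x^2 ≤ (u-c)^2+(v-e)^2 := by
    intro c e h
    have hnn : (0:ℝ) ≤ (u-c)^2+(v-e)^2 := by positivity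
    have hde : dist q (pt c e) = Real.sqrt ((u-c)^2+(v-e)^2) := by
      rw [dist_formula]; rfl
    rw [hde] at h
    calc x^2 ≤ (Real.sqrt ((u-c)^2+(v-e)^2))^2 := by
          apply pow_le_pow_left₀ hx.le h
      _ = (u-c)^2+(v-e)^2 := Real.sq_sqrt hnn
  have k00 := sqb 0 0 h00
  have k10 := sqb 1 0 h10
  have k01 := sqb 0 1 h01
  have k11 := sqb 1 1 h11
  have k00' : x^2 ≤ u^2+v^2 := by linarith [k00]
  have k10' : x^2 ≤ (1-u)^2+v^2 := by linarith [k10]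
  have k01' : x^2 ≤ u^2+(1-v)^2 := by linarith [k01]
  have k11' : x^2 ≤ (1-u)^2+(1-v)^2 := by linarith [k11]
  have hdq : dist p q = Real.sqrt ((a-u)^2+(b-v)^2) := by rw [dist_formula]
  have e0 : pt 0 0 0 = 0 := rfl
  have e1 : pt 0 0 1 = 0 := rfl
  have hs : dist p (pt 0 0) = Real.sqrt (a^2+b^2) := by
    rw [dist_formula, e0, e1, sub_zero, sub_zero]
  have hdnn : (0:ℝ) ≤ dist p q := dist_nonneg
  have hd2 : (dist p q)^2 = (a-u)^2+(b-v)^2 := by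
    rw [hdq]; exact Real.sq_sqrt (by positivity)
  have hkey := key a b u v x (dist p q) hpx ha2 hpy hb2 hu1 hu2 hv1 hv2 hx hdnn hd2
    k00' k10' k01' k11'
  rw [hs]
  apply le_of_sq_le' (by positivity) (Real.sqrt_nonneg _)
  rw [Real.sq_sqrt (by positivity : (0:ℝ) ≤ a^2+b^2)]
  have expand : (dist p q + 0.23*x)^2 = (dist p q)^2 + 0.46*x*(dist p q) + 0.0529*x^2 := by
    ring
  rw [expand, hd2]
  linarith [hkey]
end

section
/- Let G be a graph, and let A, B ⊆ V(G) be vertex subsets. Define the weighted overlay graph H on vertex set A ∪ B as follows: H contains all edges of the induced subgraph G[A ∪ B] with weight 1, and additionally, for every pair of vertices s, s' in S_A ∪ S_B (where S_A is the set of vertices of A with a neighbor in V(G) \ A, and similarly S_B), H contains an edge {s,s'} of weight d_G(s,s'). Then for all u, v ∈ A ∪ B, the shortest-path distance of u and v in H equals d_G(u,v). -/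
open Classical

variable {V : Type*}

/-- The boundary of a vertex set `A`: vertices of `A` having a neighbor outside `A`. -/
def gBoundary (G : SimpleGraph V) (A : Set V) : Set V :=
  {v | v ∈ A ∧ ∃ w, w ∉ A ∧ G.Adj v w}

open Classical in
/-- Edge costs of the overlay graph of `A` and `B`: edges of `G[A ∪ B]` have
cost `1`, and any pair of distinct boundary vertices is joined by an edge of
cost `d_G`; non-edges have cost `⊤`. -/
noncomputable def overlayCost (G : SimpleGraph V) (A B : Set V) (u v : V) : ℕ∞ :=
  if u ∈ A ∪ B ∧ v ∈ A ∪ B then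
    min (if G.Adj u v then (1 : ℕ∞) else ⊤)
      (if u ∈ gBoundary G A ∪ gBoundary G B ∧ v ∈ gBoundary G A ∪ gBoundary G B ∧ u ≠ v
        then (G.dist u v : ℕ∞) else ⊤)
  else ⊤

/-- Total cost of a path `u :: l` with edge costs `w`. -/
noncomputable def pathCost (w : V → V → ℕ∞) : V → List V → ℕ∞
  | _, [] => 0
  | u, x :: xs => w u x + pathCost w x xs

/-- Weighted shortest-path distance in the overlay graph of `A` and `B`. -/
noncomputable def overlayDist (G : SimpleGraph V) (A B : Set V) (u v : V) : ℕ∞ :=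
  sInf {c : ℕ∞ | ∃ l : List V, (u :: l).getLast (by simp) = v ∧
    (∀ y ∈ l, y ∈ A ∪ B) ∧ pathCost (overlayCost G A B) u l = c}

/-- Every overlay edge cost dominates the graph distance. -/
lemma dist_le_overlayCost (G : SimpleGraph V) (A B : Set V) (u v : V) :
    (G.dist u v : ℕ∞) ≤ overlayCost G A B u v := by
  unfold overlayCost
  split
  · apply le_min
    · split
      · next h =>
        have : G.dist u v ≤ 1 := SimpleGraph.dist_le h.toWalk
        exact_mod_cast this
      · exact le_top
    · split
      · exact le_rfl
      · exact le_top
  · exact le_top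

/-- Every admissible path's cost dominates the graph distance. -/
lemma dist_le_pathCost (G : SimpleGraph V) (hG : G.Connected) (A B : Set V) :
    ∀ (l : List V) (u v : V), (u :: l).getLast (by simp) = v →
      (G.dist u v : ℕ∞) ≤ pathCost (overlayCost G A B) u l := by
  intro l
  induction l with
  | nil =>
    intro u v h
    simp only [List.getLast_singleton] at h
    subst h
    simp [pathCost]
  | cons x xs ih =>
    intro u v h
    have h' : (x :: xs).getLast (by simp) = v := by
      rw [List.getLast_cons (by simp)] at h
      exact h
    have htri : G.dist u v ≤ G.dist u x + G.dist x v := hG.dist_triangle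
    calc (G.dist u v : ℕ∞) ≤ (G.dist u x : ℕ∞) + (G.dist x v : ℕ∞) := by
          exact_mod_cast htri
      _ ≤ overlayCost G A B u x + pathCost (overlayCost G A B) x xs :=
          add_le_add (dist_le_overlayCost G A B u x) (ih x v h')
      _ = pathCost (overlayCost G A B) u (x :: xs) := rfl

/-- Quasi-triangle inequality for `overlayDist` through a vertex of `A ∪ B`. -/
lemma overlayDist_le_cost_add (G : SimpleGraph V) (A B : Set V) (u t v : V)
    (ht : t ∈ A ∪ B) (hv : v ∈ A ∪ B) :
    overlayDist G A B u v ≤ overlayCost G A B u t + overlayDist G A B t v := by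
  have hne : {c : ℕ∞ | ∃ l : List V, (t :: l).getLast (by simp) = v ∧
      (∀ y ∈ l, y ∈ A ∪ B) ∧ pathCost (overlayCost G A B) t l = c}.Nonempty := by
    refine ⟨_, [v], by simp, ?_, rfl⟩
    intro y hy
    simp only [List.mem_singleton] at hy
    subst hy; exact hv
  obtain ⟨l, hl1, hl2, hl3⟩ := csInf_mem hne
  apply sInf_le
  refine ⟨t :: l, ?_, ?_, ?_⟩
  · rw [List.getLast_cons (by simp)]
    exact hl1
  · intro y hy
    rcases List.mem_cons.mp hy with h | h
    · subst h; exact ht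
    · exact hl2 y h
  · show overlayCost G A B u t + pathCost (overlayCost G A B) t l = _
    rw [hl3]
    rfl

/-- Along any walk leaving `A ∪ B` into a vertex of `A ∪ B`, there is a
boundary vertex splitting the walk. -/
lemma exists_boundary (G : SimpleGraph V) (hG : G.Connected) (A B : Set V)
    {u v : V} (q : G.Walk u v) :
    u ∉ A ∪ B → v ∈ A ∪ B →
    ∃ t ∈ gBoundary G A ∪ gBoundary G B, ∃ r : G.Walk t v,
      G.dist u t + r.length ≤ q.length := by
  induction q with
  | nil => intro hu hv; exact absurd hv hu
  | @cons a b c h q ih =>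
    intro hu hv
    by_cases hb : b ∈ A ∪ B
    · have hbd : b ∈ gBoundary G A ∪ gBoundary G B := by
        rcases hb with hb | hb
        · exact Or.inl ⟨hb, a, fun haA => hu (Or.inl haA), h.symm⟩
        · exact Or.inr ⟨hb, a, fun haB => hu (Or.inr haB), h.symm⟩
      refine ⟨b, hbd, q, ?_⟩
      have hd : G.dist a b ≤ 1 := SimpleGraph.dist_le h.toWalk
      simp only [SimpleGraph.Walk.length_cons]
      omega
    · obtain ⟨t, ht, r, hr⟩ := ih hb hv
      refine ⟨t, ht, r, ?_⟩
      have h1 : G.dist a t ≤ G.dist a b + G.dist b t := hG.dist_triangle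
      have h2 : G.dist a b ≤ 1 := SimpleGraph.dist_le h.toWalk
      simp only [SimpleGraph.Walk.length_cons]
      omega

lemma overlayDist_self_le (G : SimpleGraph V) (A B : Set V) (u : V) :
    overlayDist G A B u u ≤ 0 := by
  apply sInf_le
  exact ⟨[], by simp, by simp, rfl⟩

/-- `overlayDist` is at most the length of any walk between vertices of `A ∪ B`. -/
lemma overlayDist_le_length (G : SimpleGraph V) (hG : G.Connected) (A B : Set V) :
    ∀ (n : ℕ) (u v : V), u ∈ A ∪ B → v ∈ A ∪ B →
      ∀ p : G.Walk u v, p.length ≤ n → overlayDist G A B u v ≤ (p.length : ℕ∞) := by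
  intro n
  induction n with
  | zero =>
    intro u v hu hv p hp
    cases p with
    | nil => simpa using overlayDist_self_le G A B u
    | cons h q => simp at hp
  | succ n ih =>
    intro u v hu hv p hp
    cases p with
    | nil => simpa using overlayDist_self_le G A B u
    | @cons _ x _ h q =>
      simp only [SimpleGraph.Walk.length_cons] at hp ⊢
      by_cases hx : x ∈ A ∪ B
      · have h1 := ih x v hx hv q (by omega)
        have h2 := overlayDist_le_cost_add G A B u x v hx hv
        have hcost : overlayCost G A B u x ≤ 1 := by
          unfold overlayCost
          rw [if_pos ⟨hu, hx⟩]
          exact le_trans (min_le_left _ _) (by rw [if_pos h])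
        calc overlayDist G A B u v ≤ overlayCost G A B u x + overlayDist G A B x v := h2
          _ ≤ 1 + (q.length : ℕ∞) := add_le_add hcost h1
          _ = ((q.length + 1 : ℕ) : ℕ∞) := by push_cast; ring
      · obtain ⟨t, ht, r, hr⟩ := exists_boundary G hG A B q hx hv
        have htAB : t ∈ A ∪ B := ht.elim (fun h' => Or.inl h'.1) (fun h' => Or.inr h'.1)
        have hrlen : r.length ≤ n := by omega
        have h1 := ih t v htAB hv r hrlen
        by_cases hut : u = t
        · subst hut
          exact le_trans h1 (by exact_mod_cast Nat.le_of_lt (by omega))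
        · have hub : u ∈ gBoundary G A ∪ gBoundary G B := by
            rcases hu with hu' | hu'
            · exact Or.inl ⟨hu', x, fun hxA => hx (Or.inl hxA), h⟩
            · exact Or.inr ⟨hu', x, fun hxB => hx (Or.inr hxB), h⟩
          have hcost : overlayCost G A B u t ≤ (G.dist u t : ℕ∞) := by
            unfold overlayCost
            rw [if_pos ⟨hu, htAB⟩]
            exact le_trans (min_le_right _ _) (by rw [if_pos ⟨hub, ht, hut⟩])
          have h2 := overlayDist_le_cost_add G A B u t v htAB hv
          have hnat : G.dist u t + r.length ≤ q.length + 1 := by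
            have htri : G.dist u t ≤ G.dist u x + G.dist x t := hG.dist_triangle
            have hux : G.dist u x ≤ 1 := SimpleGraph.dist_le h.toWalk
            omega
          calc overlayDist G A B u v ≤ overlayCost G A B u t + overlayDist G A B t v := h2
            _ ≤ (G.dist u t : ℕ∞) + (r.length : ℕ∞) := add_le_add hcost h1
            _ = ((G.dist u t + r.length : ℕ) : ℕ∞) := by push_cast; ring
            _ ≤ ((q.length + 1 : ℕ) : ℕ∞) := by exact_mod_cast hnat

/-- For a connected graph `G` and vertex sets `A`, `B`, the
weighted shortest-path distance in the overlay graph of `A` and `B` coincides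
with the graph distance in `G`, for all vertices of `A ∪ B`. -/
theorem overlayDist_eq_dist (G : SimpleGraph V) (hG : G.Connected) (A B : Set V)
    (u v : V) (hu : u ∈ A ∪ B) (hv : v ∈ A ∪ B) :
    overlayDist G A B u v = (G.dist u v : ℕ∞) := by
  apply le_antisymm
  · obtain ⟨p, hp⟩ := (hG u v).exists_walk_length_eq_dist
    have := overlayDist_le_length G hG A B p.length u v hu hv p le_rfl
    rwa [hp] at this
  · apply le_sInf
    rintro c ⟨l, hl1, hl2, rfl⟩
    exact dist_le_pathCost G hG A B l u v hl1
end

section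
/- On the flat torus T of side length 1 with the toroidal metric, for any point P and any x > 0, the set of points at toroidal distance at least √2/2 − x from P is contained in a toroidal ball of radius C·x for some universal constant C (independent of P and x); moreover this set is always nonempty (it contains the antipodal point of P). -/
/-- Toroidal distance on the flat torus of side length `s`, computed on
representatives in `ℝ²`: the minimum Euclidean distance over all integer
translates. -/
noncomputable def torusDist (s : ℝ) (u v : ℝ × ℝ) : ℝ :=
  sInf {d | ∃ m : ℤ × ℤ,
    d = Real.sqrt ((u.1 - v.1 - m.1 * s) ^ 2 + (u.2 - v.2 - m.2 * s) ^ 2)}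

lemma torusDist_le (u v : ℝ × ℝ) (m : ℤ × ℤ) :
    torusDist 1 u v ≤
      Real.sqrt ((u.1 - v.1 - m.1 * 1) ^ 2 + (u.2 - v.2 - m.2 * 1) ^ 2) := by
  apply csInf_le
  · refine ⟨0, fun d hd => ?_⟩
    obtain ⟨n, rfl⟩ := hd
    exact Real.sqrt_nonneg _
  · exact ⟨m, rfl⟩

lemma half_shift (t : ℝ) : ∃ m : ℤ, |t + 1/2 - m| = 1/2 - |t - round t| := by
  have h := abs_sub_round t
  rcases le_or_gt 0 (t - round t) with h0 | h0
  · refine ⟨round t + 1, ?_⟩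
    push_cast
    rw [abs_of_nonneg h0]
    rw [abs_of_nonpos (by rw [abs_of_nonneg h0] at h; linarith)]
    ring
  · refine ⟨round t, ?_⟩
    rw [abs_of_neg h0]
    rw [abs_of_nonneg (by rw [abs_of_neg h0] at h; linarith)]
    ring

lemma key_ineq (s x g h : ℝ) (hs : s ^ 2 = 2) (hs0 : 0 < s) (hx : 0 < x)
    (hg0 : 0 ≤ g) (hh0 : 0 ≤ h) (hh : h ≤ 1/2)
    (hsum : x ≤ s / 2 → (s / 2 - x) ^ 2 ≤ g ^ 2 + h ^ 2) :
    1/2 - g ≤ 2 * s * x := by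
  rcases le_or_gt x (s / 2) with hxs | hxs
  · have hsum' := hsum hxs
    rcases le_or_gt (1/2 - 2*s*x) 0 with hc | hc
    · linarith
    · nlinarith [sq_nonneg (g - (1/2 - 2*s*x)), sq_nonneg (g + (1/2 - 2*s*x)),
        mul_pos hx hx, mul_pos hx hc, mul_pos hs0 hx]
  · nlinarith [mul_pos hs0 (show 0 < x - s/2 by linarith)]

/-- On the unit flat torus there is a universal constant `C > 0`
such that for every point `P` and every `x > 0`, the set of points at toroidal
distance at least `√2/2 − x` from `P` is contained in a toroidal ball of
radius `C·x`; moreover this set contains the antipodal point of `P`. -/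
theorem torus_diametric_partners_local :
    ∃ C : ℝ, 0 < C ∧ ∀ (P : ℝ × ℝ) (x : ℝ), 0 < x →
      (∃ c : ℝ × ℝ, ∀ q : ℝ × ℝ,
          Real.sqrt 2 / 2 - x ≤ torusDist 1 P q → torusDist 1 c q ≤ C * x) ∧
      Real.sqrt 2 / 2 - x ≤ torusDist 1 P (P.1 + 1 / 2, P.2 + 1 / 2) := by
  have hs2 : (Real.sqrt 2) ^ 2 = 2 := Real.sq_sqrt (by norm_num)
  have hs0 : (0:ℝ) < Real.sqrt 2 := Real.sqrt_pos.mpr (by norm_num)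
  refine ⟨4, by norm_num, fun P x hx => ⟨⟨(P.1 + 1/2, P.2 + 1/2), fun q hq => ?_⟩, ?_⟩⟩
  · -- main containment
    set a := P.1 - q.1 with ha
    set b := P.2 - q.2 with hb
    set ga := |a - round a| with hga
    set gb := |b - round b| with hgb
    have hga0 : 0 ≤ ga := abs_nonneg _
    have hgb0 : 0 ≤ gb := abs_nonneg _
    have hgah : ga ≤ 1/2 := abs_sub_round a
    have hgbh : gb ≤ 1/2 := abs_sub_round b
    have hD : torusDist 1 P q ≤ Real.sqrt (ga ^ 2 + gb ^ 2) := by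
      have := torusDist_le P q (round a, round b)
      simpa [hga, hgb, sq_abs, mul_one] using this
    have hsum : ∀ (g h : ℝ), |g| = g → |h| = h →
        (g = ga ∧ h = gb) ∨ (g = gb ∧ h = ga) → True := fun _ _ _ _ _ => trivial
    have hsq : x ≤ Real.sqrt 2 / 2 → (Real.sqrt 2 / 2 - x) ^ 2 ≤ ga ^ 2 + gb ^ 2 := by
      intro hxs
      have h1 : Real.sqrt 2 / 2 - x ≤ Real.sqrt (ga ^ 2 + gb ^ 2) := le_trans hq hD
      have h2 : (Real.sqrt (ga ^ 2 + gb ^ 2)) ^ 2 = ga ^ 2 + gb ^ 2 :=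
        Real.sq_sqrt (by positivity)
      nlinarith [Real.sqrt_nonneg (ga ^ 2 + gb ^ 2)]
    have hka : 1/2 - ga ≤ 2 * Real.sqrt 2 * x :=
      key_ineq _ _ _ _ hs2 hs0 hx hga0 hgb0 hgbh hsq
    have hkb : 1/2 - gb ≤ 2 * Real.sqrt 2 * x :=
      key_ineq _ _ _ _ hs2 hs0 hx hgb0 hga0 hgah
        (fun h => by linarith [hsq h])
    obtain ⟨m1, hm1⟩ := half_shift a
    obtain ⟨m2, hm2⟩ := half_shift b
    have hle : torusDist 1 (P.1 + 1/2, P.2 + 1/2) q ≤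
        Real.sqrt ((1/2 - ga) ^ 2 + (1/2 - gb) ^ 2) := by
      refine le_trans (torusDist_le (P.1 + 1/2, P.2 + 1/2) q (m1, m2)) (le_of_eq ?_)
      show Real.sqrt ((P.1 + 1/2 - q.1 - (m1:ℝ) * 1) ^ 2 +
        (P.2 + 1/2 - q.2 - (m2:ℝ) * 1) ^ 2) = _
      congr 1
      rw [← sq_abs (P.1 + 1/2 - q.1 - (m1:ℝ) * 1), ← sq_abs (P.2 + 1/2 - q.2 - (m2:ℝ) * 1)]
      rw [show P.1 + 1/2 - q.1 - (m1:ℝ) * 1 = a + 1/2 - m1 by rw [ha]; ring, hm1]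
      rw [show P.2 + 1/2 - q.2 - (m2:ℝ) * 1 = b + 1/2 - m2 by rw [hb]; ring, hm2]
    have hfin : Real.sqrt ((1/2 - ga) ^ 2 + (1/2 - gb) ^ 2) ≤ 4 * x := by
      rw [show (4:ℝ) * x = Real.sqrt ((4*x) ^ 2) from
        (Real.sqrt_sq (by positivity)).symm]
      apply Real.sqrt_le_sqrt
      nlinarith [sq_nonneg (1/2 - ga), sq_nonneg (1/2 - gb)]
    exact le_trans hle hfin
  · -- antipode
    have h1 : Real.sqrt 2 / 2 ≤ torusDist 1 P (P.1 + 1/2, P.2 + 1/2) := by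
      apply le_csInf
      · exact ⟨_, ⟨(0, 0), rfl⟩⟩
      · rintro d ⟨m, rfl⟩
        rw [show Real.sqrt 2 / 2 = Real.sqrt (1/2) by
          rw [show (1:ℝ)/2 = (Real.sqrt 2 / 2) ^ 2 by nlinarith, Real.sqrt_sq (by positivity)]]
        apply Real.sqrt_le_sqrt
        have h1 : (1:ℝ) ≤ (2 * (m.1:ℝ) + 1) ^ 2 := by
          have : (1:ℤ) ≤ (2 * m.1 + 1) ^ 2 := by
            rcases le_or_gt 0 m.1 with h | h <;> nlinarith
          exact_mod_cast this
        have h2 : (1:ℝ) ≤ (2 * (m.2:ℝ) + 1) ^ 2 := by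
          have : (1:ℤ) ≤ (2 * m.2 + 1) ^ 2 := by
            rcases le_or_gt 0 m.2 with h | h <;> nlinarith
          exact_mod_cast this
        nlinarith
    linarith
end
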